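/- arXiv:0806.2430 — 4 statements merged into one kernel-verified Lean document; each statement's English description precedes it below -/
import Mathlib

section
/- For every n ≥ 1, every 0 < α ≤ 1 ≤ β ≤ λ and every M ∈ ℕ there exists a natural number N = N(n, α, β, λ, M) with the following property: for every t > 0, every family π of cubes in ℝⁿ with covering multiplicity at most M such that αt ≤ diam Q ≤ βt for all Q ∈ π, and every assignment to each Q ∈ π of a cube K_Q with Q ⊆ K_Q and diam K_Q ≤ λt, the family {K_Q : Q ∈ π} can be partitioned into at most N subfamilies, each consisting of pairwise disjoint cubes. -/
open MeasureTheory Metric Set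
open scoped ENNReal

/-- A closed cube `Q(c, r)` in `ℝⁿ` (with the uniform norm): center `c`, radius `r`. -/
structure PCube (n : ℕ) where
  c : Fin n → ℝ
  r : ℝ

namespace PCube

variable {n : ℕ}

/-- The underlying set of the cube. -/
def toSet (Q : PCube n) : Set (Fin n → ℝ) := Metric.closedBall Q.c Q.r

/-- The diameter `2r` of the cube (uniform norm). -/
def diam (Q : PCube n) : ℝ := 2 * Q.r

/-- Dilation `λQ` of the cube about its center. -/
def scale (Q : PCube n) (l : ℝ) : PCube n := ⟨Q.c, l * Q.r⟩

/-- The volume `|Q| = (2r)ⁿ` of the cube. -/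
def vol (Q : PCube n) : ℝ := (2 * Q.r) ^ n

end PCube

/-- Distance between two subsets of `ℝⁿ`. -/
noncomputable def setDist {n : ℕ} (A B : Set (Fin n → ℝ)) : ℝ :=
  sInf (Set.image2 dist A B)

/-- Oscillation `E(f; U)` of `f` on `U`. -/
noncomputable def osc {n : ℕ} (f : (Fin n → ℝ) → ℝ) (U : Set (Fin n → ℝ)) : ℝ :=
  sSup ((fun q : (Fin n → ℝ) × (Fin n → ℝ) => |f q.1 - f q.2|) '' (U ×ˢ U))

/-- `Q` is `α`-porous with respect to `S`. -/
def Porous {n : ℕ} (α : ℝ) (S : Set (Fin n → ℝ)) (Q : PCube n) : Prop :=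
  ∃ Q' : PCube n, 0 < Q'.r ∧ Q'.toSet ⊆ Q.toSet \ S ∧ α * Q.diam ≤ Q'.diam

/-- `‖∇F(x)‖ = max_i |∂F/∂x_i(x)|`. -/
noncomputable def gradNorm {n : ℕ} (F : (Fin n → ℝ) → ℝ) (x : Fin n → ℝ) : ℝ :=
  ‖fun i : Fin n => fderiv ℝ F x (Pi.single i 1)‖

/-- A packing: a finite family of nondegenerate, pairwise disjoint cubes. -/
def IsPacking {n : ℕ} (π : Finset (PCube n)) : Prop :=
  (∀ Q ∈ π, 0 < Q.r) ∧ ∀ Q ∈ π, ∀ Q' ∈ π, Q ≠ Q' → Disjoint Q.toSet Q'.toSet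

/-- All cubes in the family have equal diameter. -/
def EqualDiam {n : ℕ} (π : Finset (PCube n)) : Prop :=
  ∀ Q ∈ π, ∀ Q' ∈ π, Q.r = Q'.r

/-- The functional `A_p(f; t : S)` (via local oscillations). -/
noncomputable def Ap {n : ℕ} (p : ℝ) (f : (Fin n → ℝ) → ℝ) (t : ℝ)
    (S : Set (Fin n → ℝ)) : ℝ≥0∞ :=
  ⨆ π ∈ {π : Finset (PCube n) | IsPacking π ∧ EqualDiam π ∧ (∀ Q ∈ π, Q.c ∈ S) ∧
      ∀ Q ∈ π, Q.diam ≤ t},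
    ENNReal.ofReal ((∑ Q ∈ π, Q.vol * osc f (Q.toSet ∩ S) ^ p) ^ (1 / p))

/-- `𝔸_{p,α}(f; t : S)`: as `A_p` but over `α`-porous packings. -/
noncomputable def ApPorous {n : ℕ} (p α : ℝ) (f : (Fin n → ℝ) → ℝ) (t : ℝ)
    (S : Set (Fin n → ℝ)) : ℝ≥0∞ :=
  ⨆ π ∈ {π : Finset (PCube n) | IsPacking π ∧ EqualDiam π ∧ (∀ Q ∈ π, Q.c ∈ S) ∧
      (∀ Q ∈ π, Q.diam ≤ t) ∧ ∀ Q ∈ π, Porous α S Q},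
    ENNReal.ofReal ((∑ Q ∈ π, Q.vol * osc f (Q.toSet ∩ S) ^ p) ^ (1 / p))

/-- `E(f; Q)_{L_p(μ)}`. -/
noncomputable def oscLp {n : ℕ} (μ : Measure (Fin n → ℝ)) (p : ℝ) (f : (Fin n → ℝ) → ℝ)
    (Q : PCube n) : ℝ≥0∞ :=
  ((μ Q.toSet)⁻¹ ^ 2 *
    ∫⁻ x in Q.toSet, ∫⁻ y in Q.toSet, ENNReal.ofReal (|f x - f y| ^ p) ∂μ ∂μ) ^ (1 / p)

/-- `A_p(f; t : S)_{L_p(μ)}`. -/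
noncomputable def ApLp {n : ℕ} (μ : Measure (Fin n → ℝ)) (p : ℝ) (f : (Fin n → ℝ) → ℝ)
    (t : ℝ) (S : Set (Fin n → ℝ)) : ℝ≥0∞ :=
  ⨆ π ∈ {π : Finset (PCube n) | IsPacking π ∧ EqualDiam π ∧ (∀ Q ∈ π, Q.c ∈ S) ∧
      ∀ Q ∈ π, Q.diam ≤ t},
    (∑ Q ∈ π, ENNReal.ofReal Q.vol * oscLp μ p f Q ^ p) ^ (1 / p)

/-- `𝒜_{p,α}(f; t : S)_{L_p(μ)}`: over `α`-porous packings centered at the boundary of `S`. -/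
noncomputable def AcalLp {n : ℕ} (μ : Measure (Fin n → ℝ)) (p α : ℝ) (f : (Fin n → ℝ) → ℝ)
    (t : ℝ) (S : Set (Fin n → ℝ)) : ℝ≥0∞ :=
  ⨆ π ∈ {π : Finset (PCube n) | IsPacking π ∧ EqualDiam π ∧ (∀ Q ∈ π, Q.c ∈ frontier S) ∧
      (∀ Q ∈ π, Q.diam ≤ t) ∧ ∀ Q ∈ π, Porous α S Q},
    (∑ Q ∈ π, ENNReal.ofReal Q.vol * oscLp μ p f Q ^ p) ^ (1 / p)

/-- `ρ_{α,S}(x,y) ∈ [0,∞]`. -/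
noncomputable def rho {n : ℕ} (α : ℝ) (S : Set (Fin n → ℝ)) (x y : Fin n → ℝ) : ℝ≥0∞ :=
  sInf {d : ℝ≥0∞ | ∃ Q : PCube n, 0 < Q.r ∧ x ∈ Q.toSet ∧ y ∈ Q.toSet ∧
    (Q.scale α).toSet ⊆ Sᶜ ∧ d = ENNReal.ofReal Q.diam}

/-- The sharp maximal function `f^♯_{∞,S}`. -/
noncomputable def sharpMax {n : ℕ} (S : Set (Fin n → ℝ)) (f : (Fin n → ℝ) → ℝ)
    (x : Fin n → ℝ) : ℝ :=
  sSup {v : ℝ | ∃ r : ℝ, 0 < r ∧ ∃ y ∈ Metric.closedBall x r ∩ S,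
    ∃ z ∈ Metric.closedBall x r ∩ S, v = |f y - f z| / r}

/-- `supp μ = S`. -/
def IsSuppOn {n : ℕ} (μ : Measure (Fin n → ℝ)) (S : Set (Fin n → ℝ)) : Prop :=
  μ Sᶜ = 0 ∧ ∀ x ∈ S, ∀ r : ℝ, 0 < r → 0 < μ (Metric.closedBall x r)

/-- The doubling condition (1.12). -/
def Doubling {n : ℕ} (μ : Measure (Fin n → ℝ)) (S : Set (Fin n → ℝ)) (cμ : ℝ) : Prop :=
  ∀ x ∈ S, ∀ r : ℝ, 0 < r → r ≤ 1 / 2 →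
    μ (Metric.closedBall x (2 * r)) ≤ ENNReal.ofReal cμ * μ (Metric.closedBall x r)

/-- Condition `(D_n)` (1.11). -/
def CondDn {n : ℕ} (μ : Measure (Fin n → ℝ)) (S : Set (Fin n → ℝ)) (Cμ : ℝ) : Prop :=
  ∀ x ∈ S, ∀ r : ℝ, 0 < r → r ≤ 1 → ∀ k : ℝ, 1 ≤ k → k ≤ 1 / r →
    μ (Metric.closedBall x (k * r)) ≤ ENNReal.ofReal (Cμ * k ^ n) * μ (Metric.closedBall x r)

/-- The normalization condition (1.13). -/
def Normalized {n : ℕ} (μ : Measure (Fin n → ℝ)) (S : Set (Fin n → ℝ)) (C' C'' : ℝ) : Prop :=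
  ∀ x ∈ S, ENNReal.ofReal C' ≤ μ (Metric.closedBall x 1) ∧
    μ (Metric.closedBall x 1) ≤ ENNReal.ofReal C''

/-- The double integral over `{‖x−y‖ < t}` (before taking the `1/p` power). -/
noncomputable def I1 {n : ℕ} (μ : Measure (Fin n → ℝ)) (p : ℝ) (S : Set (Fin n → ℝ))
    (f : (Fin n → ℝ) → ℝ) (t : ℝ) : ℝ≥0∞ :=
  ∫⁻ x in S, ∫⁻ y in S,
    ({y : Fin n → ℝ | dist x y < t}.indicator
      (fun y => ENNReal.ofReal (|f x - f y| ^ p) * ENNReal.ofReal (t ^ ((n : ℝ) - p)) *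
        ((μ (Metric.closedBall x t))⁻¹) ^ 2)) y ∂μ ∂μ

/-- The double integral over `{ρ_{α,S}(x,y) < δ}` (before taking the `1/p` power). -/
noncomputable def I2 {n : ℕ} (μ : Measure (Fin n → ℝ)) (p α : ℝ) (S : Set (Fin n → ℝ))
    (f : (Fin n → ℝ) → ℝ) (δ : ℝ) : ℝ≥0∞ :=
  ∫⁻ x in S, ∫⁻ y in S,
    ({y : Fin n → ℝ | rho α S x y < ENNReal.ofReal δ}.indicator
      (fun y => ENNReal.ofReal (|f x - f y| ^ p) * rho α S x y ^ ((n : ℝ) - p) *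
        ((μ (Metric.closedBall x (rho α S x y).toReal))⁻¹) ^ 2)) y ∂μ ∂μ

/-!
Tile `ℝⁿ` by the grid of half-open cubes of side `L = λt` and file each `K_Q` under the cell
containing its center. Two cells whose indices agree modulo 3 without being equal are more than
`2L` apart in some coordinate, so cubes of radius at most `L/2` centered in them are disjoint.
Inside one cell, every `Q` with `K_Q` filed there has its center within `L` of the cell center
and radius at least `αt/2`, hence contains a point of a fixed grid of mesh `αt/2` with
`(⌈4λ/α⌉ + 1)ⁿ` points; each point lies in at most `M` cubes of `π`, which bounds the number of
`K_Q` per cell by `M(⌈4λ/α⌉ + 1)ⁿ`. Colour `K_Q` by its cell index modulo 3 together with its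
position within its cell.
-/

lemma Set.exists_fin_injOn_fibers {α β : Type*} {S : Set α} (f : α → β) {c : ℕ}
    (h : ∀ b, {x ∈ S | f x = b}.Finite ∧ {x ∈ S | f x = b}.ncard ≤ c) :
    ∃ ψ : α → Fin (c + 1), ∀ x ∈ S, ∀ y ∈ S, f x = f y → ψ x = ψ y → x = y := by
  have hinj : ∀ b, ∃ g : α → Fin (c + 1), InjOn g {x ∈ S | f x = b} := fun b => by
    obtain ⟨g, -, hg⟩ := (h b).1.exists_injOn_of_encard_le (t := (univ : Set (Fin (c + 1)))) <| by
      rw [← (h b).1.cast_ncard_eq, encard_univ, ENat.card_eq_coe_fintype_card,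
        Fintype.card_fin]
      exact_mod_cast (h b).2.trans c.le_succ
    exact ⟨g, hg⟩
  choose g hg using hinj
  exact ⟨fun x => g (f x) x, fun x hx y hy hxy hψ =>
    hg (f x) ⟨hx, rfl⟩ ⟨hy, hxy.symm⟩ (by simpa only [hxy] using hψ)⟩

lemma exists_nat_abs_add_mul_sub_le {s a x : ℝ} (hs : 0 < s) (hax : a ≤ x) :
    ∃ k : ℕ, (k : ℝ) ≤ (x - a) / s ∧ |a + s * k - x| ≤ s := by
  have hnonneg : 0 ≤ (x - a) / s := div_nonneg (sub_nonneg.2 hax) hs.le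
  refine ⟨⌊(x - a) / s⌋₊, Nat.floor_le hnonneg, abs_le.2 ⟨?_, ?_⟩⟩
  · have := (div_lt_iff₀ hs).1 (Nat.lt_floor_add_one ((x - a) / s))
    linarith
  · have := (le_div_iff₀ hs).1 (Nat.floor_le hnonneg)
    linarith

lemma two_mul_lt_abs_sub_of_floor_div_modEq {L x y : ℝ} (hL : 0 < L)
    (hmod : ⌊x / L⌋ ≡ ⌊y / L⌋ [ZMOD 3]) (hne : ⌊x / L⌋ ≠ ⌊y / L⌋) : 2 * L < |x - y| := by
  wlog hlt : ⌊x / L⌋ < ⌊y / L⌋ generalizing x y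
  · rw [abs_sub_comm]
    exact this hmod.symm hne.symm (lt_of_le_of_ne (not_lt.1 hlt) hne.symm)
  have h3 : ⌊x / L⌋ + 3 ≤ ⌊y / L⌋ := by
    have := hmod.dvd
    omega
  have hfloor : x / L + 2 < y / L := by
    have h3' : (⌊x / L⌋ : ℝ) + 3 ≤ ⌊y / L⌋ := by exact_mod_cast h3
    linarith [Int.lt_floor_add_one (x / L), Int.floor_le (y / L)]
  have : 2 * L < y - x := by
    rw [div_add' _ _ _ hL.ne', div_lt_div_iff_of_pos_right hL] at hfloor
    linarith
  exact this.trans_le (by rw [abs_sub_comm]; exact le_abs_self _)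

section Grid

variable {n : ℕ}

noncomputable def cellIndex (L : ℝ) (x : Fin n → ℝ) : Fin n → ℤ := fun i => ⌊x i / L⌋

lemma dist_cellCenter_le {L : ℝ} (hL : 0 < L) (x : Fin n → ℝ) :
    dist x (fun i => (cellIndex L x i + 2⁻¹) * L) ≤ L / 2 := by
  refine (dist_pi_le_iff (by positivity)).2 fun i => ?_
  rw [Real.dist_eq, abs_le]
  have h1 := (Int.floor_le (x i / L))
  have h2 := (Int.lt_floor_add_one (x i / L))
  rw [le_div_iff₀ hL] at h1
  rw [div_lt_iff₀ hL] at h2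
  simp only [cellIndex]
  constructor <;> linarith

lemma two_mul_lt_dist_of_cellIndex_modEq {L : ℝ} (hL : 0 < L) {x y : Fin n → ℝ}
    (hmod : ∀ i, cellIndex L x i ≡ cellIndex L y i [ZMOD 3])
    (hne : cellIndex L x ≠ cellIndex L y) : 2 * L < dist x y := by
  obtain ⟨i, hi⟩ := Function.ne_iff.1 hne
  calc 2 * L < |x i - y i| := two_mul_lt_abs_sub_of_floor_div_modEq hL (hmod i) hi
    _ = dist (x i) (y i) := (Real.dist_eq _ _).symm
    _ ≤ dist x y := dist_le_pi_dist x y i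

lemma exists_gridPoint_dist_le {s R : ℝ} (hs : 0 < s) {p x : Fin n → ℝ}
    (hx : x ∈ closedBall p R) :
    ∃ v : Fin n → Fin (⌈2 * R / s⌉₊ + 1), dist (fun i => p i - R + s * v i) x ≤ s := by
  have hcoord : ∀ i, ∃ k : Fin (⌈2 * R / s⌉₊ + 1), |p i - R + s * k - x i| ≤ s := by
    intro i
    have hxi := abs_le.1 (mem_closedBall.1 ((dist_le_pi_dist x p i).trans (mem_closedBall.1 hx)))
    obtain ⟨k, hk, hdist⟩ := exists_nat_abs_add_mul_sub_le hs (by linarith : p i - R ≤ x i)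
    have hkR : (k : ℝ) ≤ ⌈2 * R / s⌉₊ :=
      hk.trans <| (div_le_div_of_nonneg_right (by linarith) hs.le).trans (Nat.le_ceil _)
    exact ⟨⟨k, Nat.lt_succ_of_le (by exact_mod_cast hkR)⟩, hdist⟩
  choose v hv using hcoord
  exact ⟨v, (dist_pi_le_iff hs.le).2 fun i => (Real.dist_eq _ _).trans_le (hv i)⟩

lemma PCube.finite_ncard_le_of_center_mem_closedBall {M : ℕ} {π : Set (PCube n)} {s : ℝ}
    (hs : 0 < s) (hr : ∀ Q ∈ π, s ≤ Q.r)
    (hmul : ∀ x, {Q ∈ π | x ∈ Q.toSet}.Finite ∧ {Q ∈ π | x ∈ Q.toSet}.ncard ≤ M)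
    (p : Fin n → ℝ) (R : ℝ) :
    {Q ∈ π | Q.c ∈ closedBall p R}.Finite ∧
      {Q ∈ π | Q.c ∈ closedBall p R}.ncard ≤ M * (⌈2 * R / s⌉₊ + 1) ^ n := by
  set g : (Fin n → Fin (⌈2 * R / s⌉₊ + 1)) → Fin n → ℝ := fun v i => p i - R + s * v i
  have hsub : {Q ∈ π | Q.c ∈ closedBall p R} ⊆ ⋃ v, {Q ∈ π | g v ∈ Q.toSet} := by
    rintro Q ⟨hQ, hc⟩
    obtain ⟨v, hv⟩ := exists_gridPoint_dist_le hs hc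
    exact mem_iUnion.2 ⟨v, hQ, mem_closedBall.2 (hv.trans (hr Q hQ))⟩
  have hfin : (⋃ v, {Q ∈ π | g v ∈ Q.toSet}).Finite := finite_iUnion fun v => (hmul (g v)).1
  refine ⟨hfin.subset hsub, ?_⟩
  calc {Q ∈ π | Q.c ∈ closedBall p R}.ncard
      ≤ (⋃ v, {Q ∈ π | g v ∈ Q.toSet}).ncard := ncard_le_ncard hsub hfin
    _ ≤ ∑ v, {Q ∈ π | g v ∈ Q.toSet}.ncard := ncard_iUnion_le_of_fintype _
    _ ≤ ∑ _v : Fin n → Fin (⌈2 * R / s⌉₊ + 1), M := Finset.sum_le_sum fun v _ => (hmul (g v)).2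
    _ = M * (⌈2 * R / s⌉₊ + 1) ^ n := by
      rw [Finset.sum_const, Finset.card_univ, Fintype.card_fun, Fintype.card_fin,
        Fintype.card_fin, smul_eq_mul, mul_comm]

lemma PCube.finite_ncard_image_cellIndex_eq_le {M : ℕ} {π : Set (PCube n)}
    {K : PCube n → PCube n} {s L : ℝ} (hs : 0 < s) (hL : 0 < L) (hr : ∀ Q ∈ π, s ≤ Q.r)
    (hmul : ∀ x, {Q ∈ π | x ∈ Q.toSet}.Finite ∧ {Q ∈ π | x ∈ Q.toSet}.ncard ≤ M)
    (hK : ∀ Q ∈ π, dist Q.c (K Q).c ≤ L / 2) (j : Fin n → ℤ) :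
    {C ∈ K '' π | cellIndex L C.c = j}.Finite ∧
      {C ∈ K '' π | cellIndex L C.c = j}.ncard ≤ M * (⌈2 * L / s⌉₊ + 1) ^ n := by
  set p : Fin n → ℝ := fun i => (j i + 2⁻¹) * L
  obtain ⟨hfin, hcard⟩ := PCube.finite_ncard_le_of_center_mem_closedBall hs hr hmul p L
  have hsub : {C ∈ K '' π | cellIndex L C.c = j} ⊆ K '' {Q ∈ π | Q.c ∈ closedBall p L} := by
    rintro _ ⟨⟨Q, hQ, rfl⟩, rfl⟩
    exact ⟨Q, ⟨hQ, mem_closedBall.2 <| (dist_triangle _ (K Q).c _).trans <|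
      (add_le_add (hK Q hQ) (dist_cellCenter_le hL (K Q).c)).trans_eq (add_halves L)⟩, rfl⟩
  exact ⟨(hfin.image K).subset hsub,
    (ncard_le_ncard hsub (hfin.image K)).trans ((ncard_image_le hfin).trans hcard)⟩

end Grid

theorem statement1_general (n : ℕ) (α β lam : ℝ) (M : ℕ)
    (hα0 : 0 < α) (hβ : 1 ≤ β) (hlam : β ≤ lam) :
    ∃ N : ℕ, 0 < N ∧
      ∀ t : ℝ, 0 < t → ∀ (π : Set (PCube n)) (K : PCube n → PCube n),
        (∀ Q ∈ π, 0 < Q.r) →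
        (∀ x : Fin n → ℝ,
          {Q ∈ π | x ∈ Q.toSet}.Finite ∧ {Q ∈ π | x ∈ Q.toSet}.ncard ≤ M) →
        (∀ Q ∈ π, α * t ≤ Q.diam ∧ Q.diam ≤ β * t) →
        (∀ Q ∈ π, 0 < (K Q).r ∧ Q.toSet ⊆ (K Q).toSet ∧ (K Q).diam ≤ lam * t) →
        ∃ φ : PCube n → Fin N,
          ∀ Q ∈ π, ∀ Q' ∈ π, φ (K Q) = φ (K Q') → K Q ≠ K Q' →
            Disjoint (K Q).toSet (K Q').toSet := by
  refine ⟨Fintype.card ((Fin n → ZMod 3) × Fin (M * (⌈4 * lam / α⌉₊ + 1) ^ n + 1)),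
    Fintype.card_pos, fun t ht π K hr hmul hdiam hK => ?_⟩
  set L := lam * t
  have hL : 0 < L := mul_pos (by linarith) ht
  have hKr : ∀ Q ∈ π, (K Q).r ≤ L / 2 := fun Q hQ => by
    linarith [(hK Q hQ).2.2, show (K Q).diam = 2 * (K Q).r from rfl]
  have hQr : ∀ Q ∈ π, α * t / 2 ≤ Q.r := fun Q hQ => by
    linarith [(hdiam Q hQ).1, show Q.diam = 2 * Q.r from rfl]
  have hcenter : ∀ Q ∈ π, dist Q.c (K Q).c ≤ L / 2 := fun Q hQ =>
    ((hK Q hQ).2.1 (mem_closedBall_self (hr Q hQ).le)).trans (hKr Q hQ)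
  have hfiber := PCube.finite_ncard_image_cellIndex_eq_le (by positivity) hL hQr hmul hcenter
  rw [show 2 * L / (α * t / 2) = 4 * lam / α by field_simp; ring] at hfiber
  obtain ⟨ψ, hψ⟩ := Set.exists_fin_injOn_fibers _ hfiber
  refine ⟨fun C => Fintype.equivFin _ (fun i => (cellIndex L C.c i : ZMod 3), ψ C), ?_⟩
  intro Q hQ Q' hQ' hφ hne
  simp only [EmbeddingLike.apply_eq_iff_eq, Prod.mk.injEq, funext_iff,
    ZMod.intCast_eq_intCast_iff] at hφ
  have hcell : cellIndex L (K Q).c ≠ cellIndex L (K Q').c := fun h =>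
    hne (hψ _ ⟨Q, hQ, rfl⟩ _ ⟨Q', hQ', rfl⟩ h hφ.2)
  exact closedBall_disjoint_closedBall <|
    (two_mul_lt_dist_of_cellIndex_modEq hL hφ.1 hcell).trans_le'
      (by linarith [hKr Q hQ, hKr Q' hQ'])

theorem statement1 (n : ℕ) (hn : 1 ≤ n) (α β lam : ℝ) (M : ℕ)
    (hα0 : 0 < α) (hα1 : α ≤ 1) (hβ : 1 ≤ β) (hlam : β ≤ lam) :
    ∃ N : ℕ, 0 < N ∧
      ∀ t : ℝ, 0 < t → ∀ (π : Set (PCube n)) (K : PCube n → PCube n),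
        (∀ Q ∈ π, 0 < Q.r) →
        (∀ x : Fin n → ℝ,
          {Q ∈ π | x ∈ Q.toSet}.Finite ∧ {Q ∈ π | x ∈ Q.toSet}.ncard ≤ M) →
        (∀ Q ∈ π, α * t ≤ Q.diam ∧ Q.diam ≤ β * t) →
        (∀ Q ∈ π, 0 < (K Q).r ∧ Q.toSet ⊆ (K Q).toSet ∧ (K Q).diam ≤ lam * t) →
        ∃ φ : PCube n → Fin N,
          ∀ Q ∈ π, ∀ Q' ∈ π, φ (K Q) = φ (K Q') → K Q ≠ K Q' →
            Disjoint (K Q).toSet (K Q').toSet :=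
  statement1_general n α β lam M hα0 hβ hlam
end

section
/- Let S be a nonempty closed proper subset of ℝⁿ. Let Q and Q' be Whitney-type cubes for S (i.e., diam Q ≤ dist(Q,S) ≤ 4 diam Q and similarly for Q') with Q ∩ Q' ≠ ∅ and r_{Q'} ≤ r_Q, and let a_Q, a_{Q'} ∈ S be nearest points of S to Q and to Q' respectively. Set Q̃ := Q(a_Q, 10 diam Q). Then: (i) a_{Q'} ∈ Q̃; (ii) for every β ∈ (0, 3/20) and every η ∈ (0,1], the cube ηQ̃ is β-porous with respect to S; (iii) for every ς ∈ (0,3), ςQ ⊆ Q̃ and ςQ ∩ S = ∅. -/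
/-! Since `ℝⁿ` with the uniform norm is a normed space, a point outside a ball `B(c, r)` is at
distance exactly `‖x - c‖ - r` from it. Hence, with `d = dist(Q, S) ∈ [2r_Q, 8r_Q]`, the open
ball `B(c_Q, r_Q + d)` misses `S`, while the nearest point satisfies `‖a_Q - c_Q‖ ≤ r_Q + d`;
(i) and (iii) are then triangle-inequality estimates. For (ii), with `R` the radius of
`ηQ̃`, the ball of radius `s = min(R/2, r_Q + d)` centred on the segment from `a_Q` to `c_Q`, at
distance `s` from `a_Q`, stays inside `B(c_Q, r_Q + d)` and within `R` of `a_Q`. -/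

open MeasureTheory Metric Set
open scoped ENNReal

lemma dist_le_add_infDist_closedBall {α : Type*} [PseudoMetricSpace α] (x c : α) {r : ℝ}
    (hr : 0 ≤ r) : dist x c ≤ r + infDist x (closedBall c r) := by
  have h : dist x c - r ≤ infDist x (closedBall c r) :=
    (le_infDist ⟨c, mem_closedBall_self hr⟩).2 fun y hy => by
      linarith [dist_triangle x y c, mem_closedBall.1 hy]
  linarith

section NormedSpace

variable {E : Type*} [NormedAddCommGroup E] [NormedSpace ℝ E]

lemma infDist_closedBall_le {x c : E} {r : ℝ} (hr : 0 ≤ r) (hrx : r ≤ dist x c) :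
    infDist x (closedBall c r) ≤ dist x c - r := by
  set D := dist x c
  rcases (hr.trans hrx).eq_or_lt with hD | hD
  · have hx : x ∈ closedBall c r := mem_closedBall.2 (by linarith)
    rw [infDist_zero_of_mem hx]
    linarith
  -- where the segment from `c` to `x` leaves the ball
  set z := AffineMap.lineMap c x (r / D)
  have hrD : r / D ≤ 1 := (div_le_one hD).2 hrx
  have hzc : dist z c = r := by
    rw [dist_lineMap_left, Real.norm_of_nonneg (by positivity), dist_comm,
      div_mul_cancel₀ _ hD.ne']
  have hzx : dist x z = D - r := by
    rw [dist_comm, dist_lineMap_right, Real.norm_of_nonneg (by linarith), dist_comm, sub_mul,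
      div_mul_cancel₀ _ hD.ne', one_mul]
  calc infDist x (closedBall c r) ≤ dist x z := infDist_le_dist_of_mem (mem_closedBall.2 hzc.le)
    _ = D - r := hzx

lemma exists_dist_le_ball_subset_ball {a c : E} {N s : ℝ} (hs : 0 ≤ s) (hsN : s ≤ N)
    (hac : dist a c ≤ N) : ∃ z, dist z a ≤ s ∧ ball z s ⊆ ball c N := by
  rcases hs.eq_or_lt with rfl | hs
  · exact ⟨a, dist_self a ▸ le_rfl, by simp⟩
  have hN : 0 < N := hs.trans_le hsN
  have hsN' : s / N ≤ 1 := (div_le_one hN).2 hsN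
  refine ⟨AffineMap.lineMap a c (s / N), ?_, ball_subset_ball' ?_⟩
  · rw [dist_lineMap_left, Real.norm_of_nonneg (by positivity)]
    calc s / N * dist a c ≤ s / N * N := by gcongr
      _ = s := div_mul_cancel₀ _ hN.ne'
  · rw [dist_lineMap_right, Real.norm_of_nonneg (by linarith)]
    calc s + (1 - s / N) * dist a c ≤ s + (1 - s / N) * N := by gcongr
      _ = N := by field_simp; ring

lemma exists_closedBall_subset_closedBall_diff {S : Set E} {a c : E} {N R ρ : ℝ}
    (hS : Disjoint (ball c N) S) (hac : dist a c ≤ N) (hρ : 0 ≤ ρ) (hρR : 2 * ρ < R)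
    (hρN : ρ < N) : ∃ z, closedBall z ρ ⊆ closedBall a R \ S := by
  set s := min (R / 2) N
  have hρs : ρ < s := lt_min (by linarith) hρN
  obtain ⟨z, hza, hzc⟩ :=
    exists_dist_le_ball_subset_ball (hρ.trans hρs.le) (min_le_right _ _) hac
  refine ⟨z, subset_sdiff.2 ⟨closedBall_subset_closedBall' ?_, ?_⟩⟩
  · linarith [min_le_left (R / 2) N]
  · exact hS.mono_left ((closedBall_subset_ball hρs).trans hzc)

end NormedSpace

lemma setDist_le_infDist {n : ℕ} {A S : Set (Fin n → ℝ)} {y : Fin n → ℝ} (hy : y ∈ S) :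
    setDist A S ≤ infDist y A := by
  rcases A.eq_empty_or_nonempty with rfl | hA
  · simp [setDist]
  refine (le_infDist hA).2 fun x hx => ?_
  rw [dist_comm]
  exact csInf_le ⟨0, by rintro _ ⟨_, _, _, _, rfl⟩; exact dist_nonneg⟩ ⟨x, hx, y, hy, rfl⟩

lemma PCube.disjoint_ball_setDist {n : ℕ} {S : Set (Fin n → ℝ)} (Q : PCube n) (hr : 0 ≤ Q.r)
    (hd : 0 < setDist Q.toSet S) : Disjoint (ball Q.c (Q.r + setDist Q.toSet S)) S := by
  refine disjoint_left.2 fun y hyc hyS => ?_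
  have hdy : setDist Q.toSet S ≤ infDist y (closedBall Q.c Q.r) := setDist_le_infDist hyS
  rw [mem_ball] at hyc
  by_cases hry : Q.r ≤ dist y Q.c
  · linarith [infDist_closedBall_le hr hry]
  · rw [infDist_zero_of_mem (mem_closedBall.2 (not_le.1 hry).le)] at hdy
    linarith

theorem statement9_general (n : ℕ) (S : Set (Fin n → ℝ))
    (Q Q' : PCube n) (hQr : 0 < Q.r) (hQ'r : 0 < Q'.r)
    (hQ1 : Q.diam ≤ setDist Q.toSet S) (hQ2 : setDist Q.toSet S ≤ 4 * Q.diam)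
    (hQ'2 : setDist Q'.toSet S ≤ 4 * Q'.diam)
    (hmeet : (Q.toSet ∩ Q'.toSet).Nonempty) (hrr : Q'.r ≤ Q.r)
    (a a' : Fin n → ℝ)
    (ha : Metric.infDist a Q.toSet = setDist Q.toSet S)
    (ha' : Metric.infDist a' Q'.toSet = setDist Q'.toSet S) :
    a' ∈ (PCube.mk a (10 * Q.diam)).toSet ∧
    (∀ β : ℝ, 0 < β → β < 3 / 20 → ∀ η : ℝ, 0 < η → η ≤ 1 →
      Porous β S ((PCube.mk a (10 * Q.diam)).scale η)) ∧
    (∀ ς : ℝ, 0 < ς → ς < 3 →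
      (Q.scale ς).toSet ⊆ (PCube.mk a (10 * Q.diam)).toSet ∧
        (Q.scale ς).toSet ∩ S = ∅) := by
  rw [PCube.diam] at hQ1 hQ2 hQ'2
  set d := setDist Q.toSet S
  have hfree : Disjoint (ball Q.c (Q.r + d)) S := Q.disjoint_ball_setDist hQr.le (by linarith)
  have hac : dist a Q.c ≤ Q.r + d := ha ▸ dist_le_add_infDist_closedBall a Q.c hQr.le
  have hac' : dist a' Q'.c ≤ Q'.r + setDist Q'.toSet S :=
    ha' ▸ dist_le_add_infDist_closedBall a' Q'.c hQ'r.le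
  obtain ⟨x, hxQ, hxQ'⟩ := hmeet
  rw [PCube.toSet, mem_closedBall] at hxQ hxQ'
  simp only [PCube.diam, PCube.scale, PCube.toSet, mem_closedBall]
  refine ⟨?_, fun β hβ hβ' η hη hη' => ?_, fun ς hς hς' => ⟨?_, ?_⟩⟩
  · linarith [dist_triangle4 a' Q'.c x Q.c, dist_triangle a' Q.c a, dist_comm x Q'.c,
      dist_comm a Q.c]
  · set R := η * (10 * (2 * Q.r))
    obtain ⟨z, hz⟩ := exists_closedBall_subset_closedBall_diff (R := R) (ρ := β * R) hfree hac
      (by positivity) (by nlinarith [mul_pos hη hQr]) (by nlinarith [mul_pos hη hQr])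
    exact ⟨⟨z, β * R⟩, by positivity, hz, by simp only [PCube.diam]; linarith⟩
  · exact closedBall_subset_closedBall' (by nlinarith [dist_comm a Q.c])
  · exact disjoint_iff_inter_eq_empty.1
      (hfree.mono_left (closedBall_subset_ball (by nlinarith)))

theorem statement9 (n : ℕ) (S : Set (Fin n → ℝ)) (hne : S.Nonempty) (hcl : IsClosed S)
    (hproper : S ≠ Set.univ)
    (Q Q' : PCube n) (hQr : 0 < Q.r) (hQ'r : 0 < Q'.r)
    (hQ1 : Q.diam ≤ setDist Q.toSet S) (hQ2 : setDist Q.toSet S ≤ 4 * Q.diam)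
    (hQ'1 : Q'.diam ≤ setDist Q'.toSet S) (hQ'2 : setDist Q'.toSet S ≤ 4 * Q'.diam)
    (hmeet : (Q.toSet ∩ Q'.toSet).Nonempty) (hrr : Q'.r ≤ Q.r)
    (a a' : Fin n → ℝ) (haS : a ∈ S) (ha'S : a' ∈ S)
    (ha : Metric.infDist a Q.toSet = setDist Q.toSet S)
    (ha' : Metric.infDist a' Q'.toSet = setDist Q'.toSet S) :
    a' ∈ (PCube.mk a (10 * Q.diam)).toSet ∧
    (∀ β : ℝ, 0 < β → β < 3 / 20 → ∀ η : ℝ, 0 < η → η ≤ 1 →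
      Porous β S ((PCube.mk a (10 * Q.diam)).scale η)) ∧
    (∀ ς : ℝ, 0 < ς → ς < 3 →
      (Q.scale ς).toSet ⊆ (PCube.mk a (10 * Q.diam)).toSet ∧
        (Q.scale ς).toSet ∩ S = ∅) :=
  statement9_general n S Q Q' hQr hQ'r hQ1 hQ2 hQ'2 hmeet hrr a a' ha ha'
end

section
/- Let S be a nonempty closed proper subset of ℝⁿ, let K be a cube with 40 diam K ≤ dist(K, S), and let Q be a Whitney-type cube for S (diam Q ≤ dist(Q,S) ≤ 4 diam Q) containing the center x_K of K. Then K ⊆ (9/8)Q and (8/9) diam Q ≤ dist(K, S) ≤ 5 diam Q. -/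
open MeasureTheory Metric Set
open scoped ENNReal

lemma setDist_le_dist {n : ℕ} {A B : Set (Fin n → ℝ)} {a b : Fin n → ℝ}
    (ha : a ∈ A) (hb : b ∈ B) : setDist A B ≤ dist a b := by
  refine csInf_le ⟨0, ?_⟩ (Set.mem_image2_of_mem ha hb)
  rintro d ⟨x, hx, y, hy, rfl⟩
  exact dist_nonneg

lemma le_setDist_of {n : ℕ} {A B : Set (Fin n → ℝ)} (hA : A.Nonempty) (hB : B.Nonempty)
    {c : ℝ} (h : ∀ a ∈ A, ∀ b ∈ B, c ≤ dist a b) : c ≤ setDist A B := by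
  refine le_csInf (hA.image2 hB) ?_
  rintro d ⟨x, hx, y, hy, rfl⟩
  exact h x hx y hy

theorem statement10 (n : ℕ) (S : Set (Fin n → ℝ)) (hne : S.Nonempty) (hcl : IsClosed S)
    (hproper : S ≠ Set.univ)
    (K Q : PCube n) (hKr : 0 < K.r) (hQr : 0 < Q.r)
    (hK : 40 * K.diam ≤ setDist K.toSet S)
    (hQ1 : Q.diam ≤ setDist Q.toSet S) (hQ2 : setDist Q.toSet S ≤ 4 * Q.diam)
    (hc : K.c ∈ Q.toSet) :
    K.toSet ⊆ (Q.scale (9/8)).toSet ∧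
    (8/9) * Q.diam ≤ setDist K.toSet S ∧ setDist K.toSet S ≤ 5 * Q.diam := by
  have hKne : K.toSet.Nonempty := ⟨K.c, Metric.mem_closedBall_self hKr.le⟩
  have hcK : K.c ∈ K.toSet := Metric.mem_closedBall_self hKr.le
  have hcQ : dist K.c Q.c ≤ Q.r := hc
  -- upper bound: setDist K S ≤ setDist Q S + 2 Q.r
  have hupper : setDist K.toSet S ≤ setDist Q.toSet S + 2 * Q.r := by
    have h1 : setDist K.toSet S - 2 * Q.r ≤ setDist Q.toSet S := by
      refine le_setDist_of ⟨Q.c, Metric.mem_closedBall_self hQr.le⟩ hne ?_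
      intro y hy s hs
      have h2 : setDist K.toSet S ≤ dist K.c s := setDist_le_dist hcK hs
      have h3 : dist K.c s ≤ dist K.c Q.c + dist Q.c y + dist y s :=
        dist_triangle4 _ _ _ _
      have h4 : dist Q.c y ≤ Q.r := by
        rw [dist_comm]; exact hy
      linarith
    linarith
  have hup : setDist K.toSet S ≤ 5 * Q.diam := by
    simp only [PCube.diam] at *; linarith
  -- diam K small
  have hKrsmall : 80 * K.r ≤ setDist K.toSet S := by
    simp only [PCube.diam] at hK; linarith
  have hKQ : K.r ≤ Q.r / 8 := by
    simp only [PCube.diam] at hup; linarith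
  -- inclusion
  refine ⟨?_, ?_, hup⟩
  · intro x hx
    have hx' : dist x K.c ≤ K.r := hx
    have : dist x Q.c ≤ dist x K.c + dist K.c Q.c := dist_triangle _ _ _
    show dist x Q.c ≤ (9/8 : ℝ) * Q.r
    linarith
  · -- lower bound
    have hlow : Q.diam - K.r ≤ setDist K.toSet S := by
      refine le_setDist_of hKne hne ?_
      intro x hx s hs
      have h2 : setDist Q.toSet S ≤ dist K.c s := setDist_le_dist hc hs
      have h3 : dist K.c s ≤ dist K.c x + dist x s := dist_triangle _ _ _
      have h4 : dist K.c x ≤ K.r := by rw [dist_comm]; exact hx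
      linarith
    simp only [PCube.diam] at hlow ⊢
    linarith
end

section
/- Let S ⊆ ℝⁿ be a nonempty closed set and let μ be a positive Borel measure on ℝⁿ with supp μ = S such that μ(Q(x,1)) ≤ C''_μ for every x ∈ S. Let n < p < ∞. Then there exists a constant C depending only on n, p and C''_μ such that for every continuously differentiable function F : ℝⁿ → ℝ with F ∈ L_p(ℝⁿ) and ∫_{ℝⁿ} ‖∇F(x)‖^p dx < ∞ one has ( ∫_{ℝⁿ} |F|^p dμ )^{1/p} ≤ C ( ‖F‖_{L_p(ℝⁿ)} + ( ∫_{ℝⁿ} ‖∇F(x)‖^p dx )^{1/p} ). (The paper states this for continuous functions in W_p^1(ℝⁿ); here F is taken to be C¹ with F and ‖∇F‖ p-integrable.) -/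
open MeasureTheory Metric Set
open scoped ENNReal

/-!
For `p > n` a local Morrey inequality holds: averaging the fundamental theorem of calculus along
the segments from `x` over the ball `B(x, r)`, and estimating the gradient term by Hölder's
inequality on the ball shrunk by the homothety of ratio `t` (which costs `t ^ (-n / p)`, integrable
on `(0, 1]` precisely because `p > n`), gives `|F x| ^ p ≤ K ∫_{B(x,r)} (|F| ^ p + ‖∇F‖ ^ p)`.
Integrating this against `μ` with `r = 1/2` and exchanging the order of integration bounds
`∫ |F| ^ p dμ` by `K sup_y μ(B(y, 1/2))` times the Sobolev norm, and a ball of radius `1/2` that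
meets `S` lies in a unit ball centred in `S`, while one that misses `S` is `μ`-null.
-/

lemma lintegral_le_lintegral_rpow_mul_measure_univ {α : Type*} [MeasurableSpace α]
    (ν : Measure α) {p : ℝ} (hp : 1 < p) {W : α → ℝ≥0∞} (hW : AEMeasurable W ν) :
    ∫⁻ a, W a ∂ν ≤ (∫⁻ a, W a ^ p ∂ν) ^ (1 / p) * ν univ ^ (1 - 1 / p) := by
  have hpq := Real.HolderConjugate.conjExponent hp
  have h := ENNReal.lintegral_mul_le_Lp_mul_Lq ν hpq hW (aemeasurable_const (b := (1 : ℝ≥0∞)))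
  simp only [Pi.mul_apply, mul_one, ENNReal.one_rpow, lintegral_const, one_mul] at h
  rwa [one_div p.conjExponent, ← hpq.one_sub_inv, ← one_div] at h

lemma setLIntegral_Ioc_rpow_ne_top {s : ℝ} (hs : -1 < s) :
    ∫⁻ t in Ioc (0 : ℝ) 1, ENNReal.ofReal (t ^ s) ≠ ∞ := by
  have h := intervalIntegral.intervalIntegrable_rpow' (a := 0) (b := 1) hs
  rw [intervalIntegrable_iff_integrableOn_Ioc_of_le zero_le_one] at h
  exact h.setLIntegral_lt_top.ne

section Homothety

variable {E : Type*} [NormedAddCommGroup E] [NormedSpace ℝ E] [MeasurableSpace E] [BorelSpace E]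
  [FiniteDimensional ℝ E] (μ : Measure E) [μ.IsAddHaarMeasure]

lemma setLIntegral_comp_homothety (W : E → ℝ≥0∞) (x : E) {t : ℝ} (ht : t ≠ 0) {s : Set E}
    (hs : MeasurableSet s) :
    ∫⁻ y in s, W (AffineMap.homothety x t y) ∂μ
      = (ENNReal.ofReal |t ^ Module.finrank ℝ E|)⁻¹ *
          ∫⁻ z in AffineMap.homothety x t '' s, W z ∂μ := by
  have hderiv : ∀ y ∈ s, HasFDerivWithinAt (AffineMap.homothety x t)
      (t • ContinuousLinearMap.id ℝ E) s y := fun y _ => by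
    show HasFDerivWithinAt (fun y => t • (y - x) + x) _ _ _
    exact (((hasFDerivAt_id y).sub_const x).const_smul t |>.add_const x).hasFDerivWithinAt
  have hinj : InjOn (AffineMap.homothety x t) s := fun y _ z _ h => by
    simpa [AffineMap.homothety_apply, ht] using h
  have hdet : (t • ContinuousLinearMap.id ℝ E).det = t ^ Module.finrank ℝ E := by
    rw [ContinuousLinearMap.det]
    simp
  have hc : ENNReal.ofReal |t ^ Module.finrank ℝ E| ≠ 0 := by
    simpa using pow_ne_zero _ ht
  rw [lintegral_image_eq_lintegral_abs_det_fderiv_mul μ hs hderiv hinj, hdet,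
    lintegral_const_mul' _ _ ENNReal.ofReal_ne_top,
    ENNReal.inv_mul_cancel_left hc ENNReal.ofReal_ne_top]

lemma setLIntegral_closedBall_comp_homothety_le {W : E → ℝ≥0∞} (hW : Measurable W) {p : ℝ}
    (hp : 1 < p) (x : E) (r : ℝ) {t : ℝ} (ht : t ∈ Ioc (0 : ℝ) 1) :
    ∫⁻ y in closedBall x r, W (AffineMap.homothety x t y) ∂μ
      ≤ ENNReal.ofReal (t ^ (-(Module.finrank ℝ E : ℝ) / p)) *
          μ (closedBall x r) ^ (1 - 1 / p) * (∫⁻ z in closedBall x r, W z ^ p ∂μ) ^ (1 / p) := by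
  set d := Module.finrank ℝ E
  set B := closedBall x r
  set τ := ENNReal.ofReal |t ^ d| with hτ
  have hτ0 : τ ≠ 0 := by simpa [τ] using pow_ne_zero d ht.1.ne'
  have hsub : AffineMap.homothety x t '' B ⊆ B := by
    rintro _ ⟨y, hy, rfl⟩
    rw [mem_closedBall, dist_homothety_center, Real.norm_eq_abs, abs_of_pos ht.1, dist_comm]
    exact (mul_le_of_le_one_left dist_nonneg ht.2).trans hy
  have hvol : μ (AffineMap.homothety x t '' B) = τ * μ B := μ.addHaar_image_homothety x t B
  have hp0 : (0 : ℝ) ≤ 1 - 1 / p := by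
    rw [sub_nonneg, div_le_one (by linarith)]; exact hp.le
  have hholder := lintegral_le_lintegral_rpow_mul_measure_univ
    (μ.restrict (AffineMap.homothety x t '' B)) hp hW.aemeasurable
  rw [Measure.restrict_apply_univ, hvol] at hholder
  have hτpow : τ⁻¹ * τ ^ (1 - 1 / p) = ENNReal.ofReal (t ^ (-(d : ℝ) / p)) := by
    rw [← ENNReal.rpow_neg_one τ, ← ENNReal.rpow_add _ _ hτ0 ENNReal.ofReal_ne_top,
      hτ, abs_of_pos (pow_pos ht.1 d), ENNReal.ofReal_rpow_of_pos (pow_pos ht.1 d),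
      ← Real.rpow_natCast, ← Real.rpow_mul ht.1.le]
    congr 2
    ring
  calc ∫⁻ y in B, W (AffineMap.homothety x t y) ∂μ
      = τ⁻¹ * ∫⁻ z in AffineMap.homothety x t '' B, W z ∂μ :=
        setLIntegral_comp_homothety μ W x ht.1.ne' measurableSet_closedBall
    _ ≤ τ⁻¹ * ((∫⁻ z in B, W z ^ p ∂μ) ^ (1 / p) * (τ * μ B) ^ (1 - 1 / p)) := by
        refine mul_le_mul_right (hholder.trans ?_) _
        gcongr ?_ * _
        exact ENNReal.rpow_le_rpow (lintegral_mono_set hsub) (by positivity)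
    _ = (τ⁻¹ * τ ^ (1 - 1 / p)) * μ B ^ (1 - 1 / p) * (∫⁻ z in B, W z ^ p ∂μ) ^ (1 / p) := by
        rw [ENNReal.mul_rpow_of_nonneg _ _ hp0]; ring
    _ = _ := by rw [hτpow]

lemma setLIntegral_closedBall_lintegral_homothety_le {W : E → ℝ≥0∞} (hW : Measurable W) {p : ℝ}
    (hp : 1 < p) (x : E) (r : ℝ) :
    ∫⁻ y in closedBall x r, (∫⁻ t in Ioc (0 : ℝ) 1, W (AffineMap.homothety x t y)) ∂μ
      ≤ (∫⁻ t in Ioc (0 : ℝ) 1, ENNReal.ofReal (t ^ (-(Module.finrank ℝ E : ℝ) / p))) *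
          μ (closedBall x r) ^ (1 - 1 / p) * (∫⁻ z in closedBall x r, W z ^ p ∂μ) ^ (1 / p) := by
  have hmeas : Measurable (Function.uncurry fun y (t : ℝ) => W (AffineMap.homothety x t y)) :=
    hW.comp (by fun_prop : Continuous fun q : E × ℝ => q.2 • (q.1 - x) + x).measurable
  rw [lintegral_lintegral_swap hmeas.aemeasurable, mul_assoc,
    ← lintegral_mul_const _ (by fun_prop)]
  refine setLIntegral_mono' measurableSet_Ioc fun t ht => ?_
  rw [← mul_assoc]
  exact setLIntegral_closedBall_comp_homothety_le μ hW hp x r ht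

end Homothety

lemma lintegral_fin_zero (h : (Fin 0 → ℝ) → ℝ≥0∞) (x : Fin 0 → ℝ) : ∫⁻ y, h y = h x := by
  rw [lintegral_unique, volume_pi, Measure.pi_univ, Finset.univ_eq_empty, Finset.prod_empty,
    mul_one]
  exact congrArg h (Subsingleton.elim _ _)

section BallAverages

variable {E : Type*} [PseudoMetricSpace E] [MeasurableSpace E]

lemma measure_closedBall_le_of_measure_compl_eq_zero {μ : Measure E} {S : Set E}
    (hS : μ Sᶜ = 0) {r : ℝ} {M : ℝ≥0∞} (hM : ∀ x ∈ S, μ (closedBall x (2 * r)) ≤ M) (y : E) :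
    μ (closedBall y r) ≤ M := by
  rcases (closedBall y r ∩ S).eq_empty_or_nonempty with hempty | ⟨z, hzy, hzS⟩
  · calc μ (closedBall y r) ≤ μ Sᶜ :=
          measure_mono fun w hw hwS => hempty.subset ⟨hw, hwS⟩
      _ ≤ M := hS ▸ zero_le
  · refine (measure_mono (closedBall_subset_closedBall' ?_)).trans (hM z hzS)
    rw [mem_closedBall, dist_comm] at hzy
    linarith

variable [OpensMeasurableSpace E] [SecondCountableTopology E]

lemma lintegral_le_mul_of_le_setLIntegral_closedBall {μ ν : Measure E} [SFinite μ] [SFinite ν]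
    {f h : E → ℝ≥0∞} (hh : Measurable h) {r : ℝ} {K M : ℝ≥0∞}
    (hf : ∀ x, f x ≤ K * ∫⁻ y in closedBall x r, h y ∂ν) (hμ : ∀ y, μ (closedBall y r) ≤ M) :
    ∫⁻ x, f x ∂μ ≤ K * M * ∫⁻ y, h y ∂ν := by
  have hmeas : Measurable (Function.uncurry fun x y => (closedBall x r).indicator h y) := by
    change Measurable ({q : E × E | dist q.2 q.1 ≤ r}.indicator (h ∘ Prod.snd))
    exact (hh.comp measurable_snd).indicator (measurableSet_le (by fun_prop) measurable_const)
  have hswap : ∀ y, ∫⁻ x, (closedBall x r).indicator h y ∂μ = h y * μ (closedBall y r) := by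
    intro y
    have hsymm : ∀ x,
        (closedBall x r).indicator h y = (closedBall y r).indicator (fun _ => h y) x := fun x => by
      simp only [Set.indicator, mem_closedBall, dist_comm]
    rw [lintegral_congr hsymm, lintegral_indicator_const measurableSet_closedBall, mul_comm]
  calc ∫⁻ x, f x ∂μ ≤ ∫⁻ x, K * ∫⁻ y, (closedBall x r).indicator h y ∂ν ∂μ := by
        refine lintegral_mono fun x => (hf x).trans_eq ?_
        rw [lintegral_indicator measurableSet_closedBall]
    _ = K * ∫⁻ y, h y * μ (closedBall y r) ∂ν := by
        have hinner : Measurable fun x => ∫⁻ y, (closedBall x r).indicator h y ∂ν :=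
          hmeas.lintegral_prod_right'
        rw [lintegral_const_mul K hinner, lintegral_lintegral_swap hmeas.aemeasurable]
        simp_rw [hswap]
    _ ≤ K * ∫⁻ y, h y * M ∂ν := by gcongr with y; exact hμ y
    _ = K * M * ∫⁻ y, h y ∂ν := by rw [lintegral_mul_const _ hh]; ring

end BallAverages

section Morrey

variable {n : ℕ} {F : (Fin n → ℝ) → ℝ}

lemma gradNorm_nonneg (F : (Fin n → ℝ) → ℝ) (x : Fin n → ℝ) : 0 ≤ gradNorm F x := norm_nonneg _

lemma ContDiff.continuous_gradNorm (hF : ContDiff ℝ 1 F) : Continuous (gradNorm F) :=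
  (continuous_pi fun _ => (hF.continuous_fderiv one_ne_zero).clm_apply continuous_const).norm

lemma abs_fderiv_apply_le_gradNorm (F : (Fin n → ℝ) → ℝ) (z v : Fin n → ℝ) :
    |fderiv ℝ F z v| ≤ n * ‖v‖ * gradNorm F z := by
  set L := fderiv ℝ F z
  have hL : L v = ∑ i, v i * L (Pi.single i 1) := by
    conv_lhs => rw [pi_eq_sum_univ' v, map_sum]
    simp only [map_smul, smul_eq_mul]
  calc |L v| ≤ ∑ i, |v i| * |L (Pi.single i 1)| := by
        rw [hL]
        exact (Finset.abs_sum_le_sum_abs _ _).trans_eq (by simp only [abs_mul])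
    _ ≤ ∑ _i : Fin n, ‖v‖ * gradNorm F z := Finset.sum_le_sum fun i _ =>
        mul_le_mul (norm_le_pi_norm v i) (norm_le_pi_norm (fun i => L (Pi.single i 1)) i)
          (abs_nonneg _) (norm_nonneg _)
    _ = n * ‖v‖ * gradNorm F z := by simp [mul_assoc]

lemma enorm_sub_le_lintegral_gradNorm (hF : ContDiff ℝ 1 F) (x y : Fin n → ℝ) :
    ‖F y - F x‖ₑ ≤ ENNReal.ofReal (n * ‖y - x‖) *
      ∫⁻ t in Icc (0 : ℝ) 1, ENNReal.ofReal (gradNorm F (AffineMap.lineMap x y t)) := by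
  have hφ : ContDiff ℝ 1 (F ∘ AffineMap.lineMap x y) :=
    hF.comp (AffineMap.contDiff_lineMap x y)
  have hderiv : ∀ t, deriv (F ∘ AffineMap.lineMap x y) t
      = fderiv ℝ F (AffineMap.lineMap x y t) (y - x) := fun t =>
    ((hF.differentiable one_ne_zero _).hasFDerivAt.comp_hasDerivAt t
      AffineMap.hasDerivAt_lineMap).deriv
  have h := enorm_sub_le_lintegral_deriv_of_contDiffOn_Icc hφ.contDiffOn zero_le_one
  simp only [Function.comp_apply, AffineMap.lineMap_apply_zero, AffineMap.lineMap_apply_one,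
    hderiv] at h
  refine h.trans ?_
  rw [← lintegral_const_mul' _ _ ENNReal.ofReal_ne_top]
  refine lintegral_mono fun t => ?_
  rw [← ENNReal.ofReal_mul (by positivity), Real.enorm_eq_ofReal_abs]
  exact ENNReal.ofReal_le_ofReal (abs_fderiv_apply_le_gradNorm F _ _)

lemma ofReal_abs_mul_volume_closedBall_le (hF : ContDiff ℝ 1 F) (x : Fin n → ℝ) (r : ℝ) :
    ENNReal.ofReal |F x| * volume (closedBall x r)
      ≤ (∫⁻ y in closedBall x r, ENNReal.ofReal |F y|) +
        ENNReal.ofReal (n * r) * ∫⁻ y in closedBall x r,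
          ∫⁻ t in Ioc (0 : ℝ) 1, ENNReal.ofReal (gradNorm F (AffineMap.homothety x t y)) := by
  have hpt : ∀ y ∈ closedBall x r, ENNReal.ofReal |F x| ≤ ENNReal.ofReal |F y| +
      ENNReal.ofReal (n * r) *
        ∫⁻ t in Ioc (0 : ℝ) 1, ENNReal.ofReal (gradNorm F (AffineMap.homothety x t y)) := by
    intro y hy
    have hFTC := enorm_sub_le_lintegral_gradNorm hF x y
    rw [← restrict_Ioc_eq_restrict_Icc] at hFTC
    simp only [← AffineMap.homothety_eq_lineMap] at hFTC
    calc ENNReal.ofReal |F x| ≤ ENNReal.ofReal |F y| + ‖F y - F x‖ₑ := by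
          rw [Real.enorm_eq_ofReal_abs, ← ENNReal.ofReal_add (abs_nonneg _) (abs_nonneg _)]
          exact ENNReal.ofReal_le_ofReal
            (by linarith [abs_sub_abs_le_abs_sub (F x) (F y), abs_sub_comm (F x) (F y)])
      _ ≤ _ := by
          gcongr
          refine hFTC.trans (mul_le_mul_left (ENNReal.ofReal_le_ofReal ?_) _)
          rw [← dist_eq_norm]
          exact mul_le_mul_of_nonneg_left hy n.cast_nonneg
  calc ENNReal.ofReal |F x| * volume (closedBall x r)
      = ∫⁻ _ in closedBall x r, ENNReal.ofReal |F x| := (setLIntegral_const _ _).symm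
    _ ≤ _ := setLIntegral_mono' measurableSet_closedBall hpt
    _ = _ := by
        rw [lintegral_add_left hF.continuous.abs.measurable.ennreal_ofReal,
          lintegral_const_mul' _ _ ENNReal.ofReal_ne_top]

lemma exists_ofReal_abs_le_morrey {p : ℝ} (hp1 : 1 < p) (hnp : (n : ℝ) < p) {r : ℝ}
    (hr : 0 < r) :
    ∃ K : ℝ≥0∞, K ≠ ∞ ∧ ∀ F : (Fin n → ℝ) → ℝ, ContDiff ℝ 1 F → ∀ x,
      ENNReal.ofReal |F x| ≤
        K * ((∫⁻ y in closedBall x r, ENNReal.ofReal (|F y| ^ p)) ^ (1 / p) +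
          (∫⁻ y in closedBall x r, ENNReal.ofReal (gradNorm F y ^ p)) ^ (1 / p)) := by
  have hp0 : 0 < p := one_pos.trans hp1
  set V := volume (closedBall (0 : Fin n → ℝ) r)
  have hV0 : V ≠ 0 := (measure_closedBall_pos volume 0 hr).ne'
  have hVtop : V ≠ ∞ := measure_closedBall_lt_top.ne
  set c := ∫⁻ t in Ioc (0 : ℝ) 1, ENNReal.ofReal (t ^ (-(n : ℝ) / p))
  have hc : c ≠ ∞ := setLIntegral_Ioc_rpow_ne_top (by
    rw [neg_div, neg_lt_neg_iff, div_lt_one hp0]; exact hnp)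
  set k := ENNReal.ofReal (n * r)
  refine ⟨V⁻¹ * V ^ (1 - 1 / p) * (1 + k * c), by finiteness, fun F hF x => ?_⟩
  have hVx : volume (closedBall x r) = V := Measure.addHaar_closedBall_center volume x r
  set A := (∫⁻ y in closedBall x r, ENNReal.ofReal (|F y| ^ p)) ^ (1 / p)
  set B := (∫⁻ y in closedBall x r, ENNReal.ofReal (gradNorm F y ^ p)) ^ (1 / p)
  have hFterm : ∫⁻ y in closedBall x r, ENNReal.ofReal |F y| ≤ V ^ (1 - 1 / p) * A := by
    have h := lintegral_le_lintegral_rpow_mul_measure_univ (volume.restrict (closedBall x r)) hp1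
      hF.continuous.abs.measurable.ennreal_ofReal.aemeasurable
    simp only [Measure.restrict_apply_univ, hVx,
      ENNReal.ofReal_rpow_of_nonneg (abs_nonneg _) hp0.le] at h
    rwa [mul_comm] at h
  have hGterm : ∫⁻ y in closedBall x r,
      ∫⁻ t in Ioc (0 : ℝ) 1, ENNReal.ofReal (gradNorm F (AffineMap.homothety x t y))
        ≤ c * V ^ (1 - 1 / p) * B := by
    have h := setLIntegral_closedBall_lintegral_homothety_le volume
      hF.continuous_gradNorm.measurable.ennreal_ofReal hp1 x r
    simp only [Module.finrank_fin_fun, hVx,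
      ENNReal.ofReal_rpow_of_nonneg (gradNorm_nonneg F _) hp0.le] at h
    exact h
  have hmul : ENNReal.ofReal |F x| * V ≤ V ^ (1 - 1 / p) * (1 + k * c) * (A + B) := by
    calc ENNReal.ofReal |F x| * V = ENNReal.ofReal |F x| * volume (closedBall x r) := by rw [hVx]
      _ ≤ _ := ofReal_abs_mul_volume_closedBall_le hF x r
      _ ≤ V ^ (1 - 1 / p) * A + k * (c * V ^ (1 - 1 / p) * B) := by gcongr
      _ = V ^ (1 - 1 / p) * (1 * A + (k * c) * B) := by ring
      _ ≤ V ^ (1 - 1 / p) * ((1 + k * c) * A + (1 + k * c) * B) := by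
          gcongr
          · exact le_self_add
          · exact le_add_self
      _ = V ^ (1 - 1 / p) * (1 + k * c) * (A + B) := by ring
  calc ENNReal.ofReal |F x| ≤ V ^ (1 - 1 / p) * (1 + k * c) * (A + B) / V :=
        (ENNReal.le_div_iff_mul_le (Or.inl hV0) (Or.inl hVtop)).mpr hmul
    _ = _ := by rw [ENNReal.div_eq_inv_mul]; ring

lemma exists_ofReal_rpow_le_morrey {p : ℝ} (hnp : (n : ℝ) < p) {r : ℝ} (hr : 0 < r) :
    ∃ K : ℝ≥0∞, K ≠ ∞ ∧ ∀ F : (Fin n → ℝ) → ℝ, ContDiff ℝ 1 F → ∀ x,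
      ENNReal.ofReal (|F x| ^ p) ≤ K * ∫⁻ y in closedBall x r,
        (ENNReal.ofReal (|F y| ^ p) + ENNReal.ofReal (gradNorm F y ^ p)) := by
  rcases Nat.eq_zero_or_pos n with rfl | hn
  · refine ⟨1, ENNReal.one_ne_top, fun F _ x => ?_⟩
    have hball : closedBall x r = univ :=
      Subsingleton.eq_univ_of_nonempty ⟨x, mem_closedBall_self hr.le⟩
    rw [one_mul, hball, Measure.restrict_univ, lintegral_fin_zero _ x]
    exact le_self_add
  have hp1 : 1 < p := by exact_mod_cast (Nat.one_le_cast.mpr hn).trans_lt hnp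
  have hp0 : 0 < p := one_pos.trans hp1
  obtain ⟨K, hK, hmorrey⟩ := exists_ofReal_abs_le_morrey hp1 hnp hr
  refine ⟨K ^ p * 2 ^ (p - 1), by finiteness, fun F hF x => ?_⟩
  have hpow : ∀ A : ℝ≥0∞, (A ^ (1 / p)) ^ p = A := fun A => by
    rw [← ENNReal.rpow_mul, one_div_mul_cancel hp0.ne', ENNReal.rpow_one]
  calc ENNReal.ofReal (|F x| ^ p) = ENNReal.ofReal |F x| ^ p :=
        (ENNReal.ofReal_rpow_of_nonneg (abs_nonneg _) hp0.le).symm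
    _ ≤ (K * ((∫⁻ y in closedBall x r, ENNReal.ofReal (|F y| ^ p)) ^ (1 / p) +
          (∫⁻ y in closedBall x r, ENNReal.ofReal (gradNorm F y ^ p)) ^ (1 / p))) ^ p :=
        ENNReal.rpow_le_rpow (hmorrey F hF x) hp0.le
    _ ≤ K ^ p * (2 ^ (p - 1) * ((∫⁻ y in closedBall x r, ENNReal.ofReal (|F y| ^ p)) +
          ∫⁻ y in closedBall x r, ENNReal.ofReal (gradNorm F y ^ p))) := by
        rw [ENNReal.mul_rpow_of_nonneg _ _ hp0.le]
        gcongr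
        exact (ENNReal.rpow_add_le_mul_rpow_add_rpow _ _ hp1.le).trans_eq (by rw [hpow, hpow])
    _ = _ := by
        rw [mul_assoc, lintegral_add_left
          (hF.continuous.abs.rpow_const fun _ => Or.inr hp0.le).measurable.ennreal_ofReal]

end Morrey

lemma exists_lintegral_rpow_le_of_measure_closedBall_le {n : ℕ} {p : ℝ} (hnp : (n : ℝ) < p) :
    ∃ K : ℝ≥0∞, K ≠ ∞ ∧ ∀ (S : Set (Fin n → ℝ)) (μ : Measure (Fin n → ℝ)) (M : ℝ≥0∞), M ≠ ∞ →
      μ Sᶜ = 0 → (∀ x ∈ S, μ (closedBall x 1) ≤ M) →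
      ∀ F : (Fin n → ℝ) → ℝ, ContDiff ℝ 1 F →
        ∫⁻ x, ENNReal.ofReal (|F x| ^ p) ∂μ ≤
          K * M * ((∫⁻ x, ENNReal.ofReal (|F x| ^ p)) +
            ∫⁻ x, ENNReal.ofReal (gradNorm F x ^ p)) := by
  have hp0 : 0 < p := n.cast_nonneg.trans_lt hnp
  obtain ⟨K, hK, hmorrey⟩ := exists_ofReal_rpow_le_morrey hnp one_half_pos
  refine ⟨K, hK, fun S μ M hM hS hμ F hF => ?_⟩
  have hball : ∀ y, μ (closedBall y (1 / 2)) ≤ M :=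
    measure_closedBall_le_of_measure_compl_eq_zero hS (by norm_num; exact hμ)
  -- hence `μ` is σ-finite, as Tonelli's theorem requires
  have : IsLocallyFiniteMeasure μ :=
    ⟨fun y => ⟨_, closedBall_mem_nhds y one_half_pos, (hball y).trans_lt hM.lt_top⟩⟩
  have hmeas : ∀ G : (Fin n → ℝ) → ℝ, Continuous G →
      Measurable fun y => ENNReal.ofReal (G y ^ p) := fun G hG =>
    (hG.rpow_const fun _ => Or.inr hp0.le).measurable.ennreal_ofReal
  rw [← lintegral_add_left (hmeas _ hF.continuous.abs)]
  exact lintegral_le_mul_of_le_setLIntegral_closedBall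
    ((hmeas _ hF.continuous.abs).add (hmeas _ hF.continuous_gradNorm)) (hmorrey F hF) hball

lemma ENNReal.exists_rpow_le_ofReal_mul_add_rpow {K : ℝ≥0∞} (hK : K ≠ ∞) {s : ℝ} (hs : 0 ≤ s) :
    ∃ C : ℝ, 0 < C ∧ ∀ (X : ℝ≥0∞) {a b : ℝ}, 0 ≤ a → 0 ≤ b →
      X ≤ K * (ENNReal.ofReal a + ENNReal.ofReal b) →
        X ^ s ≤ ENNReal.ofReal (C * (a ^ s + b ^ s)) := by
  set L := K ^ s * LpAddConst (ENNReal.ofReal s)⁻¹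
  have hL : L ≠ ∞ := ENNReal.mul_ne_top (by finiteness) (LpAddConst_lt_top _).ne
  refine ⟨L.toReal + 1, by positivity, fun X a b ha hb hX => ?_⟩
  calc X ^ s ≤ (K * (ENNReal.ofReal a + ENNReal.ofReal b)) ^ s := ENNReal.rpow_le_rpow hX hs
    _ ≤ L * (ENNReal.ofReal a ^ s + ENNReal.ofReal b ^ s) := by
        rw [ENNReal.mul_rpow_of_nonneg _ _ hs, mul_assoc]
        gcongr
        exact ENNReal.rpow_add_le_mul_rpow_add_rpow' _ _ hs
    _ ≤ ENNReal.ofReal (L.toReal + 1) * (ENNReal.ofReal (a ^ s) + ENNReal.ofReal (b ^ s)) := by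
        rw [ENNReal.ofReal_rpow_of_nonneg ha hs, ENNReal.ofReal_rpow_of_nonneg hb hs]
        gcongr
        exact (ENNReal.le_ofReal_iff_toReal_le hL (by positivity)).mpr (by linarith)
    _ = ENNReal.ofReal ((L.toReal + 1) * (a ^ s + b ^ s)) := by
        rw [← ENNReal.ofReal_add (by positivity) (by positivity),
          ← ENNReal.ofReal_mul (by positivity)]

theorem statement15 (n : ℕ) (p C''μ : ℝ) (hp : (n : ℝ) < p) :
    ∃ C : ℝ, 0 < C ∧
      ∀ S : Set (Fin n → ℝ), S.Nonempty → IsClosed S →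
        ∀ μ : Measure (Fin n → ℝ), IsSuppOn μ S →
          (∀ x ∈ S, μ (Metric.closedBall x 1) ≤ ENNReal.ofReal C''μ) →
          ∀ F : (Fin n → ℝ) → ℝ, ContDiff ℝ 1 F →
            Integrable (fun x => |F x| ^ p) volume →
            Integrable (fun x => gradNorm F x ^ p) volume →
            (∫⁻ x, ENNReal.ofReal (|F x| ^ p) ∂μ) ^ (1 / p)
              ≤ ENNReal.ofReal
                  (C * ((∫ x, |F x| ^ p) ^ (1 / p) +
                    (∫ x, gradNorm F x ^ p) ^ (1 / p))) := by
  have hp0 : 0 < p := n.cast_nonneg.trans_lt hp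
  obtain ⟨K, hK, hbound⟩ := exists_lintegral_rpow_le_of_measure_closedBall_le hp
  obtain ⟨C, hC, hpow⟩ := ENNReal.exists_rpow_le_ofReal_mul_add_rpow
    (K := K * ENNReal.ofReal C''μ) (by finiteness) (s := 1 / p) (by positivity)
  refine ⟨C, hC, fun S _ _ μ hμ hμS F hF hIF hIG => hpow _
    (integral_nonneg fun _ => by positivity)
    (integral_nonneg fun _ => Real.rpow_nonneg (gradNorm_nonneg F _) p) ?_⟩
  rw [ofReal_integral_eq_lintegral_ofReal hIF (ae_of_all _ fun _ => by positivity),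
    ofReal_integral_eq_lintegral_ofReal hIG
      (ae_of_all _ fun _ => Real.rpow_nonneg (gradNorm_nonneg F _) p)]
  exact hbound S μ _ ENNReal.ofReal_ne_top hμ.1 hμS F hF
end
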